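/- Let γ > 1, κ > 0, ρ̄ > 0, ū ∈ ℝ and c̄ = √(κγρ̄^{γ−1}). Let θ₂ be the piecewise rarefaction/shock function of model M2 through (ρ̄, ρ̄ū), define q(σ) = ūσ + θ₂(σ) and the velocity u(σ) = q(σ)/σ. Then the total enthalpy along the 2-Lax curve of model M2, h(σ) = (κγ/(γ−1))·σ^{γ−1} + u(σ)²/2, is differentiable at σ = ρ̄ with h'(ρ̄) = (ū + c̄)·c̄/ρ̄. -/

import Mathlib

open Set Filter Topology

/-!
The momentum shift `θ₂` vanishes at `ρ̄` and has derivative `c̄` there from both sides: on the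
rarefaction branch by direct differentiation, on the shock branch because, with `p σ = κ σ^γ`,
`θ₂ σ / (σ - ρ̄) = √((σ / ρ̄) · (p σ - p ρ̄) / (σ - ρ̄)) → √(p' ρ̄) = c̄`. Hence `u' ρ̄ = c̄ / ρ̄`, and
`h' ρ̄ = κ γ ρ̄^(γ-2) + ū c̄ / ρ̄ = (c̄² + ū c̄) / ρ̄`.
-/

theorem hasDerivAt_ite_le {f g : ℝ → ℝ} {a f' : ℝ}
    (hf : HasDerivWithinAt f f' (Iic a) a) (hg : HasDerivWithinAt g f' (Ici a) a)
    (hfg : f a = g a) :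
    HasDerivAt (fun x => if x ≤ a then f x else g x) f' a := by
  have hf' : HasDerivWithinAt (fun x => if x ≤ a then f x else g x) f' (Iic a) a :=
    hf.congr (fun x hx => if_pos (mem_Iic.mp hx)) (if_pos le_rfl)
  have hg' : HasDerivWithinAt (fun x => if x ≤ a then f x else g x) f' (Ici a) a := by
    refine hg.congr (fun x hx => ?_) (by rw [if_pos le_rfl, hfg])
    rcases (mem_Ici.mp hx).eq_or_lt with rfl | hlt
    · rw [if_pos le_rfl, hfg]
    · rw [if_neg (not_le.mpr hlt)]
  simpa only [Iic_union_Ici, hasDerivWithinAt_univ] using hf'.union hg'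

theorem hasDerivAt_mul_rpow_sub_rpow {a : ℝ} (ha : a ≠ 0) (p : ℝ) :
    HasDerivAt (fun x : ℝ => x * (x ^ p - a ^ p)) (p * a ^ p) a := by
  refine ((hasDerivAt_id' a).mul ((Real.hasDerivAt_rpow_const (Or.inl ha)).sub_const
    (a ^ p))).congr_deriv ?_
  rw [Real.rpow_sub_one ha]
  field_simp
  ring

theorem hasDerivWithinAt_Ici_sqrt_mul_sub_mul_sub {f g : ℝ → ℝ} {a f' : ℝ}
    (hf : HasDerivAt f f' a) (hg : ContinuousAt g a) :
    HasDerivWithinAt (fun x => √(g x * (x - a) * (f x - f a))) √(g a * f') (Ici a) a := by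
  rw [← hasDerivWithinAt_Ioi_iff_Ici, hasDerivWithinAt_iff_tendsto_slope' self_notMem_Ioi]
  have hslope : Tendsto (slope f a) (𝓝[>] a) (𝓝 f') :=
    (hasDerivAt_iff_tendsto_slope.mp hf).mono_left (nhdsWithin_mono _ fun _ hx => ne_of_gt hx)
  have hlim : Tendsto (fun x => √(g x * slope f a x)) (𝓝[>] a) (𝓝 √(g a * f')) :=
    ((hg.tendsto.mono_left nhdsWithin_le_nhds).mul hslope).sqrt
  refine hlim.congr' ?_
  filter_upwards [self_mem_nhdsWithin] with x (hx : a < x)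
  have hxa : 0 < x - a := sub_pos.mpr hx
  have hsplit : g x * (x - a) * (f x - f a) = g x * ((f x - f a) / (x - a)) * (x - a) ^ 2 := by
    field_simp
  simp only [slope_def_field, sub_self, mul_zero, Real.sqrt_zero, sub_zero]
  rw [hsplit, Real.sqrt_mul' _ (sq_nonneg _), Real.sqrt_sq hxa.le,
    mul_div_cancel_right₀ _ hxa.ne']

theorem hasDerivAt_div_self_of_eq_mul {q : ℝ → ℝ} {a b c : ℝ} (ha : a ≠ 0)
    (hq : HasDerivAt q (b + c) a) (hqa : q a = b * a) :
    HasDerivAt (fun x => q x / x) (c / a) a := by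
  refine (hq.div (hasDerivAt_id' a) ha).congr_deriv ?_
  rw [hqa]
  field_simp
  ring

/-- The momentum shift `θ₂` of the 2-Lax curve of model M2 through `(ρ̄, ρ̄ ū)`. -/
noncomputable def lax2Shift (κ γ ρbar σ : ℝ) : ℝ :=
  if σ ≤ ρbar then
    (2 * Real.sqrt (κ * γ) / (γ - 1)) * σ * (σ ^ ((γ - 1) / 2) - ρbar ^ ((γ - 1) / 2))
  else Real.sqrt ((σ / ρbar) * (σ - ρbar) * (κ * σ ^ γ - κ * ρbar ^ γ))

theorem lax2Shift_self (κ γ ρbar : ℝ) : lax2Shift κ γ ρbar ρbar = 0 := by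
  rw [lax2Shift, if_pos le_rfl, sub_self, mul_zero]

theorem hasDerivAt_lax2Shift {κ γ ρbar : ℝ} (hγ : γ ≠ 1) (hρbar : 0 < ρbar) :
    HasDerivAt (lax2Shift κ γ ρbar) √(κ * γ * ρbar ^ (γ - 1)) ρbar := by
  have hγ1 : γ - 1 ≠ 0 := sub_ne_zero.mpr hγ
  have hsqrt_pow : ρbar ^ ((γ - 1) / 2) = √(ρbar ^ (γ - 1)) := by
    rw [Real.sqrt_eq_rpow, ← Real.rpow_mul hρbar.le]
    ring_nf
  have hrare : HasDerivAt (fun σ => (2 * √(κ * γ) / (γ - 1)) * σ *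
      (σ ^ ((γ - 1) / 2) - ρbar ^ ((γ - 1) / 2))) √(κ * γ * ρbar ^ (γ - 1)) ρbar := by
    have hfun : (fun σ => (2 * √(κ * γ) / (γ - 1)) * σ *
        (σ ^ ((γ - 1) / 2) - ρbar ^ ((γ - 1) / 2))) = fun σ => (2 * √(κ * γ) / (γ - 1)) *
        (σ * (σ ^ ((γ - 1) / 2) - ρbar ^ ((γ - 1) / 2))) := by
      ext σ; ring
    rw [hfun]
    refine ((hasDerivAt_mul_rpow_sub_rpow hρbar.ne' ((γ - 1) / 2)).const_mul _).congr_deriv ?_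
    rw [hsqrt_pow, Real.sqrt_mul' (κ * γ) (by positivity)]
    field_simp
  have hshock := hasDerivWithinAt_Ici_sqrt_mul_sub_mul_sub (g := fun σ => σ / ρbar)
    ((Real.hasDerivAt_rpow_const (p := γ) (Or.inl hρbar.ne')).const_mul κ)
    (continuous_id.div_const ρbar).continuousAt
  rw [div_self hρbar.ne', one_mul, ← mul_assoc] at hshock
  refine hasDerivAt_ite_le hrare.hasDerivWithinAt hshock ?_
  simp

/-- The total enthalpy along the 2-Lax curve of the isentropic
model M2 is differentiable at σ = ρ̄ with derivative (ū + c̄)c̄/ρ̄. -/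
theorem enthalpy_deriv_along_lax2_M2
    (γ κ ρbar ubar cbar : ℝ) (hγ : 1 < γ) (hκ : 0 < κ) (hρbar : 0 < ρbar)
    (hc : cbar = Real.sqrt (κ * γ * ρbar ^ (γ - 1)))
    (θ₂ : ℝ → ℝ)
    (hθ : ∀ σ : ℝ, θ₂ σ =
      if σ ≤ ρbar then
        (2 * Real.sqrt (κ * γ) / (γ - 1)) * σ * (σ ^ ((γ - 1) / 2) - ρbar ^ ((γ - 1) / 2))
      else Real.sqrt ((σ / ρbar) * (σ - ρbar) * (κ * σ ^ γ - κ * ρbar ^ γ)))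
    (q u : ℝ → ℝ)
    (hq : ∀ σ : ℝ, q σ = ubar * σ + θ₂ σ)
    (hu : ∀ σ : ℝ, u σ = q σ / σ) :
    HasDerivAt (fun σ => (κ * γ / (γ - 1)) * σ ^ (γ - 1) + (u σ) ^ 2 / 2)
      ((ubar + cbar) * cbar / ρbar) ρbar := by
  have hθ' : θ₂ = lax2Shift κ γ ρbar := funext hθ
  subst hθ'
  have hq' : HasDerivAt q (ubar + cbar) ρbar := by
    rw [funext hq]
    exact (((hasDerivAt_id' ρbar).const_mul ubar).add
      (hasDerivAt_lax2Shift hγ.ne' hρbar)).congr_deriv (by rw [mul_one, hc])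
  have hqρ : q ρbar = ubar * ρbar := by rw [hq, lax2Shift_self, add_zero]
  have hu' : HasDerivAt u (cbar / ρbar) ρbar := by
    rw [funext hu]
    exact hasDerivAt_div_self_of_eq_mul hρbar.ne' hq' hqρ
  have huρ : u ρbar = ubar := by rw [hu, hqρ, mul_div_cancel_right₀ _ hρbar.ne']
  have hcsq : cbar ^ 2 = κ * γ * ρbar ^ (γ - 1) := by
    rw [hc, Real.sq_sqrt (by positivity)]
  refine (((Real.hasDerivAt_rpow_const (Or.inl hρbar.ne')).const_mul (κ * γ / (γ - 1))).add
    ((hu'.pow 2).div_const 2)).congr_deriv ?_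
  have hγ1 : γ - 1 ≠ 0 := sub_ne_zero.mpr hγ.ne'
  rw [huρ, Real.rpow_sub_one hρbar.ne']
  field_simp
  linear_combination (-2) * hcsq
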